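/- arXiv:1708.03968 — 7 statements merged into one kernel-verified Lean document; each statement's English description precedes it below -/
import Mathlib

section
/- Let n ≥ 2 and let B be an n×n complex matrix with Σ_{i,j} |B_{ij}|² = 1. Set P := Σ_i |B_{ii}|². Then (1/n)·Σ_{i≠j} |(Bᴴ B)_{ij}| ≤ ((n−2)/n)·(1−P) + (2/n)·√((n−1)·P·(1−P)). -/
/-!
Bounding each entry by `‖(Bᴴ * B) i j‖ ≤ ∑ k, ‖B k i‖ * ‖B k j‖` reduces the off-diagonal sum to
the row sums `∑ k, ((∑ i, ‖B k i‖)² - ∑ i, ‖B k i‖²)`. In row `k`, split off the diagonal entry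
and let `q k` be the weight of the remaining `n - 1` entries: Cauchy–Schwarz over them bounds the
row term by `(n - 2) q k + 2 √(n - 1) ‖B k k‖ √(q k)`. Finally `∑ k, q k = 1 - P`, and a second
Cauchy–Schwarz gives `∑ k, ‖B k k‖ √(q k) ≤ √P √(1 - P)`.
-/

open Matrix Finset

theorem Matrix.norm_conjTranspose_mul_self_apply_le {m ι R : Type*} [Fintype m] [NormedRing R]
    [StarRing R] [NormedStarGroup R] (B : Matrix m ι R) (i j : ι) :
    ‖(Bᴴ * B) i j‖ ≤ ∑ k, ‖B k i‖ * ‖B k j‖ := by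
  rw [mul_apply]
  refine (norm_sum_le _ _).trans (sum_le_sum fun k _ => ?_)
  rw [conjTranspose_apply, ← norm_star (B k i)]
  exact norm_mul_le _ _

theorem Finset.sum_sum_erase_mul_eq {ι R : Type*} [Fintype ι] [DecidableEq ι] [CommRing R]
    (a : ι → R) :
    ∑ i, ∑ j ∈ univ.erase i, a i * a j = (∑ i, a i) ^ 2 - ∑ i, a i ^ 2 := by
  simp only [← mul_sum, sum_erase_eq_sub (mem_univ _), sum_sub_distrib, ← sum_mul, sq]

theorem Matrix.sum_offDiag_norm_conjTranspose_mul_self_le {m ι R : Type*} [Fintype m] [Fintype ι]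
    [DecidableEq ι] [NormedRing R] [StarRing R] [NormedStarGroup R] (B : Matrix m ι R) :
    ∑ i, ∑ j ∈ univ.erase i, ‖(Bᴴ * B) i j‖ ≤
      ∑ k, ((∑ i, ‖B k i‖) ^ 2 - ∑ i, ‖B k i‖ ^ 2) :=
  calc ∑ i, ∑ j ∈ univ.erase i, ‖(Bᴴ * B) i j‖
      ≤ ∑ i, ∑ j ∈ univ.erase i, ∑ k, ‖B k i‖ * ‖B k j‖ :=
        sum_le_sum fun i _ => sum_le_sum fun j _ => B.norm_conjTranspose_mul_self_apply_le i j
    _ = ∑ k, ∑ i, ∑ j ∈ univ.erase i, ‖B k i‖ * ‖B k j‖ := by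
        simp only [sum_comm (γ := m)]
    _ = ∑ k, ((∑ i, ‖B k i‖) ^ 2 - ∑ i, ‖B k i‖ ^ 2) := by
        simp only [sum_sum_erase_mul_eq]

theorem sq_add_sum_sub_sq_add_sum_sq_le {ι : Type*} (s : Finset ι) {x : ℝ} (hx : 0 ≤ x)
    (a : ι → ℝ) :
    (x + ∑ i ∈ s, a i) ^ 2 - (x ^ 2 + ∑ i ∈ s, a i ^ 2) ≤
      (#s - 1) * ∑ i ∈ s, a i ^ 2 + 2 * √(#s : ℝ) * x * √(∑ i ∈ s, a i ^ 2) := by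
  have hsq : (∑ i ∈ s, a i) ^ 2 ≤ #s * ∑ i ∈ s, a i ^ 2 := sq_sum_le_card_mul_sum_sq
  have hsum : ∑ i ∈ s, a i ≤ √(#s : ℝ) * √(∑ i ∈ s, a i ^ 2) := by
    rw [← Real.sqrt_mul' _ (sum_nonneg fun i _ => sq_nonneg _)]
    exact Real.le_sqrt_of_sq_le hsq
  nlinarith [mul_le_mul_of_nonneg_left hsum hx]

theorem sq_sum_sub_sum_sq_le {ι : Type*} [Fintype ι] [DecidableEq ι] (v : ι → ℝ) {k : ι}
    (hk : 0 ≤ v k) :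
    (∑ i, v i) ^ 2 - ∑ i, v i ^ 2 ≤
      (Fintype.card ι - 2) * ∑ i ∈ univ.erase k, v i ^ 2 +
        2 * √(Fintype.card ι - 1 : ℝ) * v k * √(∑ i ∈ univ.erase k, v i ^ 2) := by
  have hcard : (#(univ.erase k) : ℝ) = Fintype.card ι - 1 := by
    rw [card_erase_of_mem (mem_univ k), card_univ, Nat.cast_pred (Fintype.card_pos_iff.2 ⟨k⟩)]
  have := sq_add_sum_sub_sq_add_sum_sq_le (univ.erase k) hk v
  rw [hcard, add_sum_erase _ v (mem_univ k), add_sum_erase _ (v · ^ 2) (mem_univ k)] at this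
  linarith

theorem duality_lemma_matrix_core_general (n : ℕ)
    (B : Matrix (Fin n) (Fin n) ℂ)
    (hB : ∑ i, ∑ j, ‖B i j‖ ^ 2 = 1)
    (P : ℝ) (hP : P = ∑ i, ‖B i i‖ ^ 2) :
    (1 / n) * ∑ i, ∑ j ∈ univ.filter (fun j => j ≠ i), ‖(Bᴴ * B) i j‖ ≤
      (((n : ℝ) - 2) / n) * (1 - P) +
        (2 / n) * Real.sqrt (((n : ℝ) - 1) * P * (1 - P)) := by
  set q : Fin n → ℝ := fun k => ∑ i ∈ univ.erase k, ‖B k i‖ ^ 2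
  have hq : ∑ k, q k = 1 - P := by
    simp only [q, sum_erase_eq_sub (mem_univ _), sum_sub_distrib, hB, hP]
  have hP0 : 0 ≤ P := hP ▸ sum_nonneg fun i _ => sq_nonneg _
  have hP1 : 0 ≤ 1 - P := hq ▸ sum_nonneg fun k _ => sum_nonneg fun i _ => sq_nonneg _
  have hrows : ∑ i, ∑ j ∈ univ.erase i, ‖(Bᴴ * B) i j‖ ≤
      (n - 2) * (1 - P) + 2 * √(n - 1) * ∑ k, ‖B k k‖ * √(q k) := by
    refine B.sum_offDiag_norm_conjTranspose_mul_self_le.trans ?_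
    rw [← hq, mul_sum, mul_sum, ← sum_add_distrib]
    refine sum_le_sum fun k _ => ?_
    have := sq_sum_sub_sum_sq_le (fun i => ‖B k i‖) (norm_nonneg (B k k))
    rw [Fintype.card_fin] at this
    linarith
  have hCS : ∑ k, ‖B k k‖ * √(q k) ≤ √P * √(1 - P) := by
    refine (Real.sum_mul_le_sqrt_mul_sqrt _ _ _).trans_eq ?_
    simp only [Real.sq_sqrt (sum_nonneg fun i _ => sq_nonneg _), q, hq, hP]
  have hsqrt : √((n - 1) * P * (1 - P)) = √(n - 1) * (√P * √(1 - P)) := by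
    rw [mul_assoc, Real.sqrt_mul' _ (mul_nonneg hP0 hP1), Real.sqrt_mul' _ hP1]
  simp only [filter_ne']
  calc 1 / (n : ℝ) * ∑ i, ∑ j ∈ univ.erase i, ‖(Bᴴ * B) i j‖
      ≤ 1 / n * ((n - 2) * (1 - P) + 2 * √(n - 1) * (√P * √(1 - P))) := by
        gcongr
        exact hrows.trans (by gcongr)
    _ = _ := by rw [hsqrt]; ring

/-- Matrix core of Lemma 1: for an `n × n` complex matrix `B` with unit Frobenius
norm, letting `P = ∑ i, |B i i|²`, the normalized off-diagonal `ℓ₁` norm of `Bᴴ B`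
is bounded by `((n-2)/n)(1-P) + (2/n)√((n-1)P(1-P))`. -/
theorem duality_lemma_matrix_core (n : ℕ) (hn : 2 ≤ n)
    (B : Matrix (Fin n) (Fin n) ℂ)
    (hB : ∑ i, ∑ j, ‖B i j‖ ^ 2 = 1)
    (P : ℝ) (hP : P = ∑ i, ‖B i i‖ ^ 2) :
    (1 / n) * ∑ i, ∑ j ∈ univ.filter (fun j => j ≠ i), ‖(Bᴴ * B) i j‖ ≤
      (((n : ℝ) - 2) / n) * (1 - P) +
        (2 / n) * Real.sqrt (((n : ℝ) - 1) * P * (1 - P)) :=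
  duality_lemma_matrix_core_general n B hB P hP
end

section
/- Let n ≥ 2 and d ≥ 1. Let ρ be an n×n complex positive semidefinite matrix with trace 1, let η_0,…,η_{n−1} be unit vectors in ℂ^d, and let W be the n×n matrix with entries W_{ij} = √(ρ_{ii}·ρ_{jj})·⟨η_i, η_j⟩. Let B be any n×n complex matrix with Bᴴ B = W, and set P := Σ_i |B_{ii}|². Then X := (1/n)·Σ_{j≠k} |ρ_{jk}·⟨η_k, η_j⟩| ≤ ((n−2)/n)·(1−P) + (2/n)·√((n−1)·P·(1−P)). -/
/-!
Put `a i j = ‖B i j‖`. Positive semidefiniteness gives `‖ρ j k‖ ≤ √(ρ j j) √(ρ k k)`, so each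
coherence term is at most `‖W j k‖ = ‖(Bᴴ B) j k‖ ≤ ∑ i, a i j * a i k`. The columns of `B` have
squared norms `ρ j j`, hence `∑ a i j ^ 2 = 1` while `P = ∑ a i i ^ 2`. In row `i`, with `t = a i i`
and `s`, `q` the sum and the sum of squares of the other entries, the off-diagonal products give
`2 t s + s ^ 2 - q`. Cauchy–Schwarz bounds `s ^ 2 ≤ (n - 1) q`, and once more over the rows
`∑ t √q ≤ √P √(1 - P)`, since `∑ q = 1 - P`.
-/

open Matrix Finset
open scoped ComplexOrder

section OffDiagonalSums

variable {ι : Type*} [Fintype ι] [DecidableEq ι]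

theorem sum_sum_ne_mul_eq_sq_sum_sub_sum_sq {R : Type*} [CommRing R] (f : ι → R) :
    ∑ j, ∑ k ∈ univ.filter (· ≠ j), f j * f k = (∑ j, f j) ^ 2 - ∑ j, f j ^ 2 := by
  have hrow : ∀ j, ∑ k ∈ univ.filter (· ≠ j), f j * f k = f j * ∑ k, f k - f j ^ 2 := by
    intro j
    rw [filter_ne', ← mul_sum, ← add_sum_erase univ f (mem_univ j)]
    ring
  simp only [hrow, sum_sub_distrib, ← sum_mul, sq]

theorem sum_sum_ne_mul_le_of_nonneg {v : ι → ℝ} (hv : ∀ j, 0 ≤ v j) (i : ι) :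
    ∑ j, ∑ k ∈ univ.filter (· ≠ j), v j * v k ≤
      2 * v i * √((Fintype.card ι - 1) * ∑ j ∈ univ.erase i, v j ^ 2) +
        (Fintype.card ι - 2) * ∑ j ∈ univ.erase i, v j ^ 2 := by
  set s := ∑ j ∈ univ.erase i, v j
  set q := ∑ j ∈ univ.erase i, v j ^ 2
  have hcard : ((univ.erase i).card : ℝ) = Fintype.card ι - 1 := by
    rw [card_erase_of_mem (mem_univ i), Nat.cast_pred (card_pos.2 ⟨i, mem_univ i⟩), card_univ]
  have hs_sq : s ^ 2 ≤ (Fintype.card ι - 1) * q := hcard ▸ sq_sum_le_card_mul_sum_sq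
  have hs : s ≤ √((Fintype.card ι - 1) * q) := (le_abs_self s).trans (Real.abs_le_sqrt hs_sq)
  have hsplit : ∑ j, ∑ k ∈ univ.filter (· ≠ j), v j * v k = 2 * v i * s + (s ^ 2 - q) := by
    rw [sum_sum_ne_mul_eq_sq_sum_sub_sum_sq, ← add_sum_erase univ v (mem_univ i),
      ← add_sum_erase univ (v · ^ 2) (mem_univ i)]
    ring
  rw [hsplit]
  nlinarith [mul_le_mul_of_nonneg_left hs (mul_nonneg zero_le_two (hv i))]

theorem sum_sum_ne_sum_mul_le {a : ι → ι → ℝ} (ha : ∀ i j, 0 ≤ a i j) :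
    ∑ j, ∑ k ∈ univ.filter (· ≠ j), ∑ i, a i j * a i k ≤
      (Fintype.card ι - 2) * (∑ i, ∑ j, a i j ^ 2 - ∑ i, a i i ^ 2) +
        2 * √((Fintype.card ι - 1) * (∑ i, a i i ^ 2) *
          (∑ i, ∑ j, a i j ^ 2 - ∑ i, a i i ^ 2)) := by
  set c : ℝ := (Fintype.card ι : ℝ)
  set P := ∑ i, a i i ^ 2
  set q : ι → ℝ := fun i => ∑ j ∈ univ.erase i, a i j ^ 2
  have hq : ∑ i, q i = ∑ i, ∑ j, a i j ^ 2 - P := by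
    rw [eq_sub_iff_add_eq', ← sum_add_distrib]
    exact sum_congr rfl fun i _ => add_sum_erase univ (a i · ^ 2) (mem_univ i)
  have hc : ∀ i, 0 ≤ (c - 1) * q i := fun i =>
    mul_nonneg (sub_nonneg.2 (Nat.one_le_cast.2 (Fintype.card_pos_iff.2 ⟨i⟩)))
      (sum_nonneg fun _ _ => sq_nonneg _)
  have hcs : ∑ i, a i i * √((c - 1) * q i) ≤ √P * √((c - 1) * ∑ i, q i) := by
    have := Real.sum_mul_le_sqrt_mul_sqrt univ (fun i => a i i) (fun i => √((c - 1) * q i))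
    simpa only [Real.sq_sqrt (hc _), ← mul_sum] using this
  calc ∑ j, ∑ k ∈ univ.filter (· ≠ j), ∑ i, a i j * a i k
      = ∑ i, ∑ j, ∑ k ∈ univ.filter (· ≠ j), a i j * a i k := by
        simp only [sum_comm (γ := ι) (s := univ.filter _)]; exact sum_comm
    _ ≤ ∑ i, (2 * a i i * √((c - 1) * q i) + (c - 2) * q i) :=
        sum_le_sum fun i _ => sum_sum_ne_mul_le_of_nonneg (ha i) i
    _ = 2 * ∑ i, a i i * √((c - 1) * q i) + (c - 2) * ∑ i, q i := by
        rw [sum_add_distrib, mul_sum, mul_sum]; simp only [mul_assoc]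
    _ ≤ 2 * (√P * √((c - 1) * ∑ i, q i)) + (c - 2) * ∑ i, q i := by gcongr
    _ = _ := by
        rw [hq, ← Real.sqrt_mul (sum_nonneg fun i _ => sq_nonneg _), add_comm]
        congr 3
        ring

end OffDiagonalSums

namespace Matrix

variable {m n 𝕜 : Type*} [Fintype m] [RCLike 𝕜]

theorem norm_conjTranspose_mul_self_apply_le_s1 (M : Matrix m n 𝕜) (j k : n) :
    ‖(Mᴴ * M) j k‖ ≤ ∑ i, ‖M i j‖ * ‖M i k‖ := by
  simp only [mul_apply, conjTranspose_apply]
  refine (norm_sum_le _ _).trans_eq (sum_congr rfl fun i _ => ?_)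
  rw [norm_mul, norm_star]

theorem re_conjTranspose_mul_self_apply_self (M : Matrix m n 𝕜) (j : n) :
    RCLike.re ((Mᴴ * M) j j) = ∑ i, ‖M i j‖ ^ 2 := by
  simp only [mul_apply, conjTranspose_apply, map_sum, RCLike.star_def, RCLike.conj_mul]
  norm_cast

theorem PosSemidef.norm_apply_le [Fintype n] {A : Matrix n n 𝕜} (hA : A.PosSemidef) (j k : n) :
    ‖A j k‖ ≤ √(RCLike.re (A j j)) * √(RCLike.re (A k k)) := by
  classical
  open scoped MatrixOrder in
  obtain ⟨S, rfl⟩ := CStarAlgebra.nonneg_iff_eq_star_mul_self.mp hA.nonneg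
  rw [star_eq_conjTranspose, re_conjTranspose_mul_self_apply_self,
    re_conjTranspose_mul_self_apply_self]
  exact (norm_conjTranspose_mul_self_apply_le_s1 S j k).trans
    (Real.sum_mul_le_sqrt_mul_sqrt _ _ _)

theorem PosSemidef.norm_apply_mul_inner_le {E : Type*} [Fintype n] [SeminormedAddCommGroup E]
    [InnerProductSpace 𝕜 E] {ρ : Matrix n n 𝕜} (hρ : ρ.PosSemidef) (η : n → E) (j k : n) :
    ‖ρ j k * inner 𝕜 (η k) (η j)‖ ≤
      ‖(√(RCLike.re (ρ j j) * RCLike.re (ρ k k)) : 𝕜) * inner 𝕜 (η j) (η k)‖ := by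
  have hdiag : 0 ≤ RCLike.re (ρ j j) := (RCLike.nonneg_iff.1 hρ.diag_nonneg).1
  rw [norm_mul, norm_mul, RCLike.norm_ofReal, abs_of_nonneg (Real.sqrt_nonneg _),
    Real.sqrt_mul hdiag, norm_inner_symm]
  gcongr
  exact hρ.norm_apply_le j k

end Matrix

theorem duality_lemma_one_general (n d : ℕ)
    (ρ : Matrix (Fin n) (Fin n) ℂ) (hρ : ρ.PosSemidef) (hρtr : ρ.trace = 1)
    (η : Fin n → EuclideanSpace ℂ (Fin d)) (hη : ∀ j, ‖η j‖ = 1)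
    (W : Matrix (Fin n) (Fin n) ℂ)
    (hW : ∀ i j, W i j =
      (Real.sqrt ((ρ i i).re * (ρ j j).re) : ℂ) * (inner ℂ (η i) (η j) : ℂ))
    (B : Matrix (Fin n) (Fin n) ℂ) (hB : Bᴴ * B = W)
    (P : ℝ) (hP : P = ∑ i, ‖B i i‖ ^ 2)
    (X : ℝ) (hX : X = (1 / n) * ∑ j, ∑ k ∈ univ.filter (fun k => k ≠ j),
      ‖ρ j k * (inner ℂ (η k) (η j) : ℂ)‖) :
    X ≤ (((n : ℝ) - 2) / n) * (1 - P) +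
      (2 / n) * Real.sqrt (((n : ℝ) - 1) * P * (1 - P)) := by
  have hentry : ∀ j k, ‖ρ j k * inner ℂ (η k) (η j)‖ ≤ ∑ i, ‖B i j‖ * ‖B i k‖ := fun j k =>
    calc _ ≤ ‖W j k‖ := hW j k ▸ hρ.norm_apply_mul_inner_le η j k
      _ ≤ _ := hB ▸ norm_conjTranspose_mul_self_apply_le_s1 B j k
  have hcol : ∀ j, ∑ i, ‖B i j‖ ^ 2 = (ρ j j).re := fun j => by
    rw [← re_conjTranspose_mul_self_apply_self, hB, hW, inner_self_eq_norm_sq_to_K, hη,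
      Real.sqrt_mul_self (Complex.nonneg_iff.1 hρ.diag_nonneg).1]
    simp
  have htotal : ∑ i, ∑ j, ‖B i j‖ ^ 2 = 1 := by
    rw [sum_comm]
    simp only [hcol, ← Complex.re_sum]
    exact congrArg Complex.re hρtr
  have hsum := sum_sum_ne_sum_mul_le (a := fun i j => ‖B i j‖) fun _ _ => norm_nonneg _
  rw [htotal, ← hP, Fintype.card_fin] at hsum
  calc X ≤ (1 / n) * (((n : ℝ) - 2) * (1 - P) + 2 * √(((n : ℝ) - 1) * P * (1 - P))) := by
        rw [hX]
        gcongr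
        exact (sum_le_sum fun j _ => sum_le_sum fun k _ => hentry j k).trans hsum
    _ = _ := by ring

/-- Lemma 1 of the paper: for a density matrix `ρ` on `ℂⁿ`, unit detector states
`η j` in `ℂ^d`, the Gram matrix `W i j = √(ρ_{ii} ρ_{jj}) ⟨η_i, η_j⟩`, and any matrix
`B` with `Bᴴ B = W`, setting `P = ∑ i, |B i i|²`, the normalized `ℓ₁` coherence
`X = (1/n) ∑_{j≠k} |ρ_{jk} ⟨η_k, η_j⟩|` satisfies the duality bound. -/
theorem duality_lemma_one (n d : ℕ) (hn : 2 ≤ n) (hd : 1 ≤ d)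
    (ρ : Matrix (Fin n) (Fin n) ℂ) (hρ : ρ.PosSemidef) (hρtr : ρ.trace = 1)
    (η : Fin n → EuclideanSpace ℂ (Fin d)) (hη : ∀ j, ‖η j‖ = 1)
    (W : Matrix (Fin n) (Fin n) ℂ)
    (hW : ∀ i j, W i j =
      (Real.sqrt ((ρ i i).re * (ρ j j).re) : ℂ) * (inner ℂ (η i) (η j) : ℂ))
    (B : Matrix (Fin n) (Fin n) ℂ) (hB : Bᴴ * B = W)
    (P : ℝ) (hP : P = ∑ i, ‖B i i‖ ^ 2)
    (X : ℝ) (hX : X = (1 / n) * ∑ j, ∑ k ∈ univ.filter (fun k => k ≠ j),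
      ‖ρ j k * (inner ℂ (η k) (η j) : ℂ)‖) :
    X ≤ (((n : ℝ) - 2) / n) * (1 - P) +
      (2 / n) * Real.sqrt (((n : ℝ) - 1) * P * (1 - P)) :=
  duality_lemma_one_general n d ρ hρ hρtr η hη W hW B hB P hP X hX
end

section
/- Let n ≥ 2 be a natural number and let X, P be real numbers with X ≥ 0, 0 ≤ P ≤ 1, and X ≤ ((n−2)/n)·(1−P) + (2/n)·√((n−1)·P·(1−P)). Then (1/2)·(X + 1/n + P) ≤ 1/2 + 1/(2√n). -/
/-- Scalar core of Theorem 1: if the duality bound of Lemma 1 holds between the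
normalized `ℓ₁` coherence `X` and the path-discrimination probability `P`, then the
winning probability `(X + 1/n + P)/2` of the combined game is at most `1/2 + 1/(2√n)`. -/
theorem duality_theorem_one_scalar (n : ℕ) (hn : 2 ≤ n) (X P : ℝ)
    (hX : 0 ≤ X) (hP0 : 0 ≤ P) (hP1 : P ≤ 1)
    (hXP : X ≤ (((n : ℝ) - 2) / n) * (1 - P) +
      (2 / n) * Real.sqrt (((n : ℝ) - 1) * P * (1 - P))) :
    (1 / 2) * (X + 1 / n + P) ≤ 1 / 2 + 1 / (2 * Real.sqrt n) := by
  have hn2 : (2:ℝ) ≤ (n:ℝ) := by exact_mod_cast hn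
  have hnpos : (0:ℝ) < (n:ℝ) := by linarith
  set s := Real.sqrt (n:ℝ) with hs
  have hs0 : 0 ≤ s := Real.sqrt_nonneg _
  have hs2 : s ^ 2 = (n:ℝ) := Real.sq_sqrt (le_of_lt hnpos)
  have hs1 : 1 ≤ s := by nlinarith
  set t := Real.sqrt (((n:ℝ) - 1) * P * (1 - P)) with ht
  have ht0 : 0 ≤ t := Real.sqrt_nonneg _
  have harg : 0 ≤ ((n:ℝ) - 1) * P * (1 - P) :=
    mul_nonneg (mul_nonneg (by linarith) hP0) (by linarith)
  have ht2 : t ^ 2 = ((n:ℝ) - 1) * P * (1 - P) := Real.sq_sqrt harg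
  have hA0 : 0 ≤ ((s-1)/2)*P + ((s+1)/2)*(1-P) := by
    have h1 := mul_nonneg (by linarith : (0:ℝ) ≤ (s-1)/2) hP0
    have h2 := mul_nonneg (by linarith : (0:ℝ) ≤ (s+1)/2) (by linarith : (0:ℝ) ≤ 1-P)
    linarith
  have hprod : (s^2 - 1)*(P*(1-P)) = ((n:ℝ)-1)*(P*(1-P)) := by rw [hs2]
  have hsq : t ^ 2 ≤ (((s-1)/2)*P + ((s+1)/2)*(1-P)) ^ 2 := by
    nlinarith [sq_nonneg (((s-1)/2)*P - ((s+1)/2)*(1-P)), hprod, ht2]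
  have key : t ≤ ((s-1)/2)*P + ((s+1)/2)*(1-P) := by
    have := Real.sqrt_le_sqrt hsq
    rwa [Real.sqrt_sq ht0, Real.sqrt_sq hA0] at this
  have hPt : P + t ≤ (s+1)/2 := by nlinarith [key]
  have hXn : (n:ℝ) * X ≤ ((n:ℝ)-2)*(1-P) + 2*t := by
    rw [div_mul_eq_mul_div, div_mul_eq_mul_div, ← add_div, le_div_iff₀ hnpos] at hXP
    linarith [hXP]
  have hgoal : (n:ℝ)*X + 1 + (n:ℝ)*P ≤ (n:ℝ) + s := by nlinarith [hXn, hPt]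
  have hsn : 1 / (2*s) = s / (2*(n:ℝ)) := by
    rw [div_eq_div_iff (by positivity) (by positivity)]
    linear_combination -2 * hs2
  have e1 : (1:ℝ)/2*(X + 1/(n:ℝ) + P) = ((n:ℝ)*X + 1 + (n:ℝ)*P)/(2*(n:ℝ)) := by
    field_simp
  have e2 : (1:ℝ)/2 + s/(2*(n:ℝ)) = ((n:ℝ) + s)/(2*(n:ℝ)) := by
    field_simp
  rw [hsn, e1, e2]
  exact div_le_div_of_nonneg_right hgoal (by positivity)
end

section
/- Let n ≥ 2 be a natural number and let x, y be real numbers with x ≥ 0, 0 ≤ y ≤ 1, and n·x − (n−2)·(1−y) ≤ 2·√((1−y)·(1+(n−1)·y)). Then either x + y ≤ 1, or ( (x + y − (n−2)/(n−1)) · (n−1)/√n )² + ( (x−y)² · (n−1)/n ) ≤ 1. -/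
/-- Scalar core of Theorem 2: if the normalized duality variables `x, y` satisfy
the rewritten Lemma 1 bound, then `(x, y)` lies in the triangle `𝒯 = {x + y ≤ 1}`
or in the ellipse region `ℰ` of Eq. (15). -/
theorem duality_theorem_two_scalar (n : ℕ) (hn : 2 ≤ n) (x y : ℝ)
    (hx : 0 ≤ x) (hy0 : 0 ≤ y) (hy1 : y ≤ 1)
    (hb : (n : ℝ) * x - ((n : ℝ) - 2) * (1 - y) ≤
      2 * Real.sqrt ((1 - y) * (1 + ((n : ℝ) - 1) * y))) :
    x + y ≤ 1 ∨
      ((x + y - ((n : ℝ) - 2) / ((n : ℝ) - 1)) * (((n : ℝ) - 1) / Real.sqrt n)) ^ 2 +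
        (x - y) ^ 2 * (((n : ℝ) - 1) / n) ≤ 1 := by
  have hN : (2 : ℝ) ≤ (n : ℝ) := by exact_mod_cast hn
  have hN0 : (0 : ℝ) < (n : ℝ) := by linarith
  by_cases hs : x + y ≤ 1
  · exact Or.inl hs
  · right
    push_neg at hs
    have hA : 0 ≤ (n : ℝ) * x - ((n : ℝ) - 2) * (1 - y) := by nlinarith
    have harg : 0 ≤ (1 - y) * (1 + ((n : ℝ) - 1) * y) := by
      apply mul_nonneg <;> nlinarith
    have hsq : ((n : ℝ) * x - ((n : ℝ) - 2) * (1 - y)) ^ 2 ≤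
        4 * ((1 - y) * (1 + ((n : ℝ) - 1) * y)) := by
      nlinarith [Real.sq_sqrt harg, Real.sqrt_nonneg ((1 - y) * (1 + ((n : ℝ) - 1) * y))]
    have key : (((n : ℝ) - 1) * (x + y) - ((n : ℝ) - 2)) ^ 2 +
        ((n : ℝ) - 1) * (x - y) ^ 2 ≤ (n : ℝ) := by nlinarith
    have hsN : (0 : ℝ) < Real.sqrt n := Real.sqrt_pos.mpr hN0
    have hN1 : ((n : ℝ) - 1) ≠ 0 := by linarith
    have hrs : Real.sqrt n ^ 2 = (n : ℝ) := Real.sq_sqrt hN0.le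
    rw [mul_div_assoc', div_pow, hrs]
    have hexp : (x + y - ((n : ℝ) - 2) / ((n : ℝ) - 1)) * ((n : ℝ) - 1) =
        ((n : ℝ) - 1) * (x + y) - ((n : ℝ) - 2) := by field_simp
    rw [hexp, div_add' _ _ _ (ne_of_gt hN0), div_le_one hN0]
    have h2 : (x - y) ^ 2 * (((n : ℝ) - 1) / n) * n = ((n : ℝ) - 1) * (x - y) ^ 2 := by
      field_simp
    linarith [key, h2.ge, h2.le]
end

section
/- Let n ≥ 2 be a natural number and let x, y be real numbers with x ≥ 0, 0 ≤ y ≤ 1, and n·x − (n−2)·(1−y) ≤ 2·√((1−y)·(1+(n−1)·y)). Then x + y ≤ (n − 2 + √n)/(n−1). -/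
/-- Theorem 1 expressed in the normalized duality variables: if `x, y` satisfy the
rewritten Lemma 1 bound, then `x + y ≤ (n - 2 + √n)/(n - 1)`. -/
theorem duality_theorem_one_xy (n : ℕ) (hn : 2 ≤ n) (x y : ℝ)
    (hx : 0 ≤ x) (hy0 : 0 ≤ y) (hy1 : y ≤ 1)
    (hb : (n : ℝ) * x - ((n : ℝ) - 2) * (1 - y) ≤
      2 * Real.sqrt ((1 - y) * (1 + ((n : ℝ) - 1) * y))) :
    x + y ≤ ((n : ℝ) - 2 + Real.sqrt n) / ((n : ℝ) - 1) := by
  set s := Real.sqrt n with hs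
  have hn2 : (2:ℝ) ≤ (n:ℝ) := by exact_mod_cast hn
  have hs0 : 0 ≤ s := Real.sqrt_nonneg _
  have hs2 : s ^ 2 = (n:ℝ) := Real.sq_sqrt (by linarith)
  have hs1 : 1 ≤ s := by nlinarith
  have hd : (0:ℝ) < (n:ℝ) - 1 := by linarith
  have hA : 0 ≤ (n:ℝ) - 2 + (n:ℝ) * s - 2 * ((n:ℝ) - 1) * y := by nlinarith
  have hqle : (1 - y) * (1 + ((n:ℝ) - 1) * y) ≤
      (((n:ℝ) - 2 + (n:ℝ) * s - 2 * ((n:ℝ) - 1) * y) / (2 * ((n:ℝ) - 1))) ^ 2 := by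
    rw [div_pow, le_div_iff₀ (by positivity)]
    nlinarith [mul_nonneg (by linarith : (0:ℝ) ≤ (n:ℝ))
      (sq_nonneg (2 * ((n:ℝ) - 1) * y - ((n:ℝ) - 2 + s))), hs2]
  have hsq : Real.sqrt ((1 - y) * (1 + ((n:ℝ) - 1) * y)) ≤
      ((n:ℝ) - 2 + (n:ℝ) * s - 2 * ((n:ℝ) - 1) * y) / (2 * ((n:ℝ) - 1)) := by
    refine (Real.sqrt_le_sqrt hqle).trans ?_
    rw [Real.sqrt_sq (div_nonneg hA (by positivity))]
  have h1 : (n:ℝ) * x - ((n:ℝ) - 2) * (1 - y) ≤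
      ((n:ℝ) - 2 + (n:ℝ) * s - 2 * ((n:ℝ) - 1) * y) / ((n:ℝ) - 1) := by
    have h2 : 2 * (((n:ℝ) - 2 + (n:ℝ) * s - 2 * ((n:ℝ) - 1) * y) / (2 * ((n:ℝ) - 1))) =
        ((n:ℝ) - 2 + (n:ℝ) * s - 2 * ((n:ℝ) - 1) * y) / ((n:ℝ) - 1) := by
      field_simp
    linarith [hb, mul_le_mul_of_nonneg_left hsq (by norm_num : (0:ℝ) ≤ 2), h2.le]
  have hkey : ((n:ℝ) * x - ((n:ℝ) - 2) * (1 - y)) * ((n:ℝ) - 1) ≤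
      (n:ℝ) - 2 + (n:ℝ) * s - 2 * ((n:ℝ) - 1) * y := by
    rw [← le_div_iff₀ hd]; exact h1
  rw [le_div_iff₀ hd]
  have hmul : (n:ℝ) * ((x + y) * ((n:ℝ) - 1)) ≤ (n:ℝ) * ((n:ℝ) - 2 + s) := by
    nlinarith [hkey]
  exact le_of_mul_le_mul_left hmul (by positivity)
end

section
/- Let n ≥ 2 and let b, w be nonnegative real numbers with n·b² + n·(n−1)·w² = 1. Let B be the n×n real matrix with B_{ii} = b for all i and B_{ij} = w for all i ≠ j, and set P := Σ_i |B_{ii}|² = n·b². Then (Bᴴ B)_{ii} = b² + (n−1)·w² for all i, (Bᴴ B)_{ij} = 2·b·w + (n−2)·w² for all i ≠ j, and (1/n)·Σ_{i≠j} |(Bᴴ B)_{ij}| = ((n−2)/n)·(1−P) + (2/n)·√((n−1)·P·(1−P)). -/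
/-!
Since `B` has real entries, `Bᴴ * B = B * B`, and the entries of the square of a matrix with
constant diagonal and constant off-diagonal are read off from `B = w • J + (b - w) • 1`,
`J * J = n • J`. The normalisation gives `P = n b²` and `1 - P = n (n - 1) w²`, so
`√((n - 1) P (1 - P)) = n (n - 1) b w`, and both sides of the last identity equal
`(n - 1) (2 b w + (n - 2) w²)`.
-/

open Matrix Finset

section ConstDiag

variable {ι R : Type*} [DecidableEq ι]

theorem conjTranspose_of_ite_eq [Star R] (a c : R) :
    (of fun i j : ι => if i = j then a else c)ᴴ =
      of fun i j => if i = j then star a else star c := by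
  ext i j
  by_cases h : i = j <;> simp [h, eq_comm]

theorem of_ite_eq_mul_of_ite_eq_apply [Fintype ι] [CommRing R] (a c a' c' : R) (i j : ι) :
    ((of fun i j : ι => if i = j then a else c) * (of fun i j => if i = j then a' else c') :
        Matrix ι ι R) i j =
      if i = j then a * a' + (Fintype.card ι - 1) * (c * c')
      else a * c' + c * a' + (Fintype.card ι - 2) * (c * c') := by
  -- the matrices are `c • J + (a - c) • 1` with `J` the all-ones matrix
  have split (x y : R) (k l : ι) :
      (if k = l then x else y) = y + (x - y) * if k = l then 1 else 0 := by
    split_ifs <;> ring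
  simp only [mul_apply, of_apply, split a c, split a' c', add_mul, mul_add, sum_add_distrib]
  simp only [sum_const, card_univ, nsmul_eq_mul, mul_comm, mul_ite, mul_one, mul_zero,
    sum_ite_eq, mem_univ, ↓reduceIte, sum_ite_eq', ite_self]
  split_ifs <;> ring

end ConstDiag

/-- Attainability part of Lemma 1: the matrix with constant diagonal `b` and
constant off-diagonal `w` (with `n b² + n(n-1) w² = 1`) saturates the duality bound,
with `P = ∑ i, |B i i|² = n b²`. -/
theorem duality_bound_attained (n : ℕ) (hn : 2 ≤ n) (b w : ℝ)
    (hb : 0 ≤ b) (hw : 0 ≤ w)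
    (hnorm : (n : ℝ) * b ^ 2 + (n : ℝ) * ((n : ℝ) - 1) * w ^ 2 = 1)
    (B : Matrix (Fin n) (Fin n) ℂ)
    (hBdef : ∀ i j, B i j = if i = j then (b : ℂ) else (w : ℂ))
    (P : ℝ) (hP : P = ∑ i, ‖B i i‖ ^ 2) :
    P = (n : ℝ) * b ^ 2 ∧
    (∀ i, (Bᴴ * B) i i = ((b ^ 2 + ((n : ℝ) - 1) * w ^ 2 : ℝ) : ℂ)) ∧
    (∀ i j, i ≠ j → (Bᴴ * B) i j = ((2 * b * w + ((n : ℝ) - 2) * w ^ 2 : ℝ) : ℂ)) ∧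
    (1 / (n : ℝ)) * ∑ i, ∑ j ∈ univ.filter (fun j => j ≠ i),
        ‖(Bᴴ * B) i j‖ =
      (((n : ℝ) - 2) / n) * (1 - P) +
        (2 / n) * Real.sqrt (((n : ℝ) - 1) * P * (1 - P)) := by
  have hB : B = of fun i j => if i = j then (b : ℂ) else (w : ℂ) := ext hBdef
  have hBB (i j : Fin n) : (Bᴴ * B) i j =
      if i = j then ((b ^ 2 + ((n : ℝ) - 1) * w ^ 2 : ℝ) : ℂ)
      else ((2 * b * w + ((n : ℝ) - 2) * w ^ 2 : ℝ) : ℂ) := by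
    rw [hB, conjTranspose_of_ite_eq, of_ite_eq_mul_of_ite_eq_apply]
    split_ifs <;> simp <;> ring
  have hPb : P = n * b ^ 2 := by simp [hP, hBdef]
  have h1P : 1 - P = n * (n - 1) * w ^ 2 := by linarith
  have hn2 : (2 : ℝ) ≤ n := by exact_mod_cast hn
  have hoff_nonneg : 0 ≤ 2 * b * w + ((n : ℝ) - 2) * w ^ 2 := by
    have : 0 ≤ (n : ℝ) - 2 := by linarith
    positivity
  have hoff_norm (i j : Fin n) (hij : j ≠ i) :
      ‖(Bᴴ * B) i j‖ = 2 * b * w + ((n : ℝ) - 2) * w ^ 2 := by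
    rw [hBB, if_neg hij.symm, Complex.norm_real, Real.norm_of_nonneg hoff_nonneg]
  have hsum : ∑ i, ∑ j ∈ univ.filter (fun j => j ≠ i), ‖(Bᴴ * B) i j‖ =
      n * (n - 1) * (2 * b * w + ((n : ℝ) - 2) * w ^ 2) := by
    rw [sum_congr rfl fun i _ => sum_congr rfl fun j hj => hoff_norm i j (mem_filter.1 hj).2]
    simp only [filter_ne', sum_const, mem_univ, card_erase_of_mem, card_univ, Fintype.card_fin,
      nsmul_eq_mul, Nat.cast_sub (one_le_two.trans hn), Nat.cast_one]
    ring
  have hsqrt : Real.sqrt ((n - 1) * P * (1 - P)) = n * (n - 1) * b * w := by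
    rw [show (n - 1) * P * (1 - P) = (n * (n - 1) * b * w) ^ 2 by rw [h1P, hPb]; ring]
    have : (0 : ℝ) ≤ n - 1 := by linarith
    exact Real.sqrt_sq (by positivity)
  refine ⟨hPb, fun i => by simp [hBB], fun i j hij => by simp [hBB, hij], ?_⟩
  rw [hsum, hsqrt, h1P]
  field_simp
  ring
end

section
/- Let n ≥ 1 be a natural number and set s := 1/2 + 1/(2 + 2√n). Then 0 ≤ s ≤ 1 and ( (√(1+(n−1)·s) + (n−1)·√(1−s)) / n )² = 1/2 + 1/(2√n). -/
/-- For the overlap `s = 1/2 + 1/(2 + 2√n)` of Theorem 1, the optimal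
discrimination probability of `n` equiprobable symmetric states equals
`1/2 + 1/(2√n)`. -/
theorem overlap_gives_optimal_probability (n : ℕ) (hn : 1 ≤ n) (s : ℝ)
    (hs : s = 1 / 2 + 1 / (2 + 2 * Real.sqrt n)) :
    0 ≤ s ∧ s ≤ 1 ∧
    ((Real.sqrt (1 + ((n : ℝ) - 1) * s) + ((n : ℝ) - 1) * Real.sqrt (1 - s)) / n) ^ 2 =
      1 / 2 + 1 / (2 * Real.sqrt n) := by
  set r := Real.sqrt n with hrdef
  have hr1 : 1 ≤ r := by
    rw [hrdef, show (1:ℝ) = Real.sqrt 1 by simp]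
    exact Real.sqrt_le_sqrt (by exact_mod_cast hn)
  have hr0 : 0 < r := by linarith
  have hr2 : r ^ 2 = n := Real.sq_sqrt (by positivity)
  have hs' : s = (2 + r) / (2 * (1 + r)) := by
    rw [hs]; field_simp; ring
  have h1 : 1 + ((n:ℝ) - 1) * s = r * (r + 1) / 2 := by
    rw [hs', ← hr2]; field_simp; ring
  have h2 : 1 - s = (r * (r + 1) / 2) / (1 + r) ^ 2 := by
    rw [hs']; field_simp; ring
  set a := Real.sqrt (r * (r + 1) / 2) with hadef
  have ha : a ^ 2 = r * (r + 1) / 2 := Real.sq_sqrt (by positivity)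
  refine ⟨by rw [hs']; positivity, ?_, ?_⟩
  · rw [hs', div_le_one (by positivity)]; linarith
  · have hsq : Real.sqrt (r * (r + 1) / 2 / (1 + r) ^ 2) = a / (1 + r) := by
      rw [show r * (r + 1) / 2 / (1 + r) ^ 2 = (a / (1 + r)) ^ 2 by
        rw [div_pow, ha], Real.sqrt_sq (by positivity)]
    rw [h1, h2, hsq, ← hadef, ← hr2]
    have key : a + ((r:ℝ) ^ 2 - 1) * (a / (1 + r)) = r * a := by
      field_simp; ring
    rw [key]
    have : (r * a / r ^ 2) ^ 2 = a ^ 2 / r ^ 2 := by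
      field_simp
    rw [this, ha]
    field_simp
end
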